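/- Let V be a real inner product space, let α and β be nonzero orthogonal vectors of V, let u and v be positive real numbers, and set σ = u·α + v·β. If χ ∈ V satisfies (1/u)·(2⟪χ,α⟫/⟪α,α⟫) = (1/v)·(2⟪χ,β⟫/⟪β,β⟫), then s_α(s_β(χ)) = s_σ(χ) = χ − (2⟪χ,σ⟫/⟪σ,σ⟫)·σ. Moreover, the vector σ itself satisfies this hypothesis, so the set of such χ is a linear subspace of V containing σ and stable under s_σ. (This is the key observation in the proof that the reflection associated to a spherical root extends to an element of the big Weyl group.) -/

import Mathlib

/-! If the coroot pairings of `χ` with orthogonal `α` and `β` are `c u` and `c v`, then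
`s_α s_β χ = χ - c v β - c u α = χ - c σ` for `σ = u α + v β`, and `c` is also the coroot pairing
of `χ` with `σ` because `⟪σ, σ⟫ = u² ⟪α, α⟫ + v² ⟪β, β⟫`. The hypothesis of the theorem says
exactly that the two pairings are proportional to `(u, v)`; it cuts out the kernel of a linear
functional, which contains `σ` and hence is stable under `s_σ`. -/

open scoped RealInnerProductSpace

/-- The orthogonal reflection in a (nonzero) vector `w` of a real inner product space:
`s_w x = x - (2⟪x,w⟫/⟪w,w⟫) • w`. -/
noncomputable def orthoRefl {V : Type*} [NormedAddCommGroup V] [InnerProductSpace ℝ V]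
    (w x : V) : V :=
  x - (2 * ⟪x, w⟫ / ⟪w, w⟫) • w

section

variable {V : Type*} [NormedAddCommGroup V] [InnerProductSpace ℝ V]

noncomputable def corootPairing (w : V) : V →ₗ[ℝ] ℝ :=
  (2 / ⟪w, w⟫) • innerₗ V w

theorem corootPairing_apply (w x : V) : corootPairing w x = 2 * ⟪x, w⟫ / ⟪w, w⟫ := by
  simp only [corootPairing, LinearMap.smul_apply, innerₗ_apply_apply, smul_eq_mul,
    real_inner_comm w x]
  ring

theorem orthoRefl_eq_sub_smul {w x : V} {c : ℝ} (h : 2 * ⟪x, w⟫ = c * ⟪w, w⟫) :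
    orthoRefl w x = x - c • w := by
  rcases eq_or_ne w 0 with rfl | hw
  · simp [orthoRefl]
  · rw [orthoRefl, h, mul_div_cancel_right₀ c (inner_self_ne_zero.mpr hw)]

theorem orthoRefl_mem {U : Submodule ℝ V} {w x : V} (hw : w ∈ U) (hx : x ∈ U) :
    orthoRefl w x ∈ U :=
  U.sub_mem hx (U.smul_mem _ hw)

theorem inner_orthoRefl_left_of_inner_eq_zero {w x y : V} (h : ⟪w, y⟫ = 0) :
    ⟪orthoRefl w x, y⟫ = ⟪x, y⟫ := by
  simp [orthoRefl, inner_sub_left, real_inner_smul_left, h]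

theorem orthoRefl_orthoRefl_eq_orthoRefl_smul_add_smul {α β χ : V} (horth : ⟪α, β⟫ = 0)
    {u v c : ℝ} (hα : 2 * ⟪χ, α⟫ = c * u * ⟪α, α⟫) (hβ : 2 * ⟪χ, β⟫ = c * v * ⟪β, β⟫) :
    orthoRefl α (orthoRefl β χ) = orthoRefl (u • α + v • β) χ := by
  have hsβ : orthoRefl β χ = χ - (c * v) • β := orthoRefl_eq_sub_smul hβ
  have hsα : orthoRefl α (orthoRefl β χ) = orthoRefl β χ - (c * u) • α := by
    refine orthoRefl_eq_sub_smul ?_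
    rwa [inner_orthoRefl_left_of_inner_eq_zero (real_inner_comm α β ▸ horth)]
  have hsσ : orthoRefl (u • α + v • β) χ = χ - c • (u • α + v • β) := by
    refine orthoRefl_eq_sub_smul ?_
    simp only [inner_add_left, inner_add_right, real_inner_smul_left, real_inner_smul_right,
      horth, real_inner_comm α β ▸ horth]
    linear_combination u * hα + v * hβ
  rw [hsα, hsβ, hsσ]
  module

theorem corootPairing_smul_add_smul_left {α β : V} (hα : α ≠ 0) (horth : ⟪α, β⟫ = 0)
    {u : ℝ} (hu : u ≠ 0) (v : ℝ) : (1 / u) * corootPairing α (u • α + v • β) = 2 := by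
  have ha : ⟪α, α⟫ ≠ 0 := inner_self_ne_zero.mpr hα
  simp only [corootPairing_apply, inner_add_left, real_inner_smul_left,
    real_inner_comm α β ▸ horth]
  field_simp
  ring

end

theorem reflection_product_eq_reflection_of_sum
    {V : Type*} [NormedAddCommGroup V] [InnerProductSpace ℝ V]
    (α β : V) (hα : α ≠ 0) (hβ : β ≠ 0) (horth : ⟪α, β⟫ = 0)
    (u v : ℝ) (hu : 0 < u) (hv : 0 < v)
    (σ : V) (hσ : σ = u • α + v • β) :
    (∀ χ : V,
      (1 / u) * (2 * ⟪χ, α⟫ / ⟪α, α⟫) = (1 / v) * (2 * ⟪χ, β⟫ / ⟪β, β⟫) →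
        orthoRefl α (orthoRefl β χ) = orthoRefl σ χ ∧
        orthoRefl σ χ = χ - (2 * ⟪χ, σ⟫ / ⟪σ, σ⟫) • σ) ∧
    ((1 / u) * (2 * ⟪σ, α⟫ / ⟪α, α⟫) = (1 / v) * (2 * ⟪σ, β⟫ / ⟪β, β⟫)) ∧
    (∃ U : Submodule ℝ V,
      (∀ χ : V, χ ∈ U ↔
        (1 / u) * (2 * ⟪χ, α⟫ / ⟪α, α⟫) = (1 / v) * (2 * ⟪χ, β⟫ / ⟪β, β⟫)) ∧
      σ ∈ U ∧ ∀ χ ∈ U, orthoRefl σ χ ∈ U) := by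
  have ha : ⟪α, α⟫ ≠ 0 := inner_self_ne_zero.mpr hα
  have hb : ⟪β, β⟫ ≠ 0 := inner_self_ne_zero.mpr hβ
  set U := LinearMap.eqLocus ((1 / u) • corootPairing α) ((1 / v) • corootPairing β)
  have mem_U (χ : V) : χ ∈ U ↔
      (1 / u) * (2 * ⟪χ, α⟫ / ⟪α, α⟫) = (1 / v) * (2 * ⟪χ, β⟫ / ⟪β, β⟫) := by
    simp only [U, LinearMap.mem_eqLocus, LinearMap.smul_apply, smul_eq_mul, corootPairing_apply]
  have hσU : σ ∈ U := by
    rw [LinearMap.mem_eqLocus, hσ, add_comm]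
    simp only [LinearMap.smul_apply, smul_eq_mul]
    rw [corootPairing_smul_add_smul_left hβ (real_inner_comm α β ▸ horth) hv.ne',
      add_comm, corootPairing_smul_add_smul_left hα horth hu.ne']
  refine ⟨fun χ h => ⟨?_, rfl⟩, (mem_U σ).mp hσU, U, mem_U, hσU, fun χ => orthoRefl_mem hσU⟩
  rw [hσ]
  refine orthoRefl_orthoRefl_eq_orthoRefl_smul_add_smul horth
    (c := (1 / u) * (2 * ⟪χ, α⟫ / ⟪α, α⟫)) ?_ ?_
  · field_simp
  · rw [h]
    field_simp
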